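/- Let S be a semigroup of partial isometries on a complex Hilbert space H, let m ≥ 1 be an integer, and let R_1, R_2, ..., R_m, S be elements of S. Then S (Q_{R_1} Q_{R_2} ··· Q_{R_m}) S* = Q_{S R_1} Q_{S R_2} ··· Q_{S R_m}, where Q_T := T T* for any operator T. -/

import Mathlib

/-!
Multiplying `(s r)(s r)⋆(s r) = s r` by `s⋆` on the left and `r⋆` on the right shows that the
product `(s⋆ s)(r r⋆)` of the initial projection of `s` and the final projection of `r` is
idempotent; in a C⋆-ring two projections with idempotent product commute. Hence `s⋆ s` can be slid
through any product of final projections, and inserting it between consecutive factors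
(`s = s s⋆ s`) splits `s Q₁ ⋯ Qₘ s⋆` into `(s Q₁ s⋆) ⋯ (s Qₘ s⋆)`, where `s Qᵢ s⋆ = Q_{s Rᵢ}`.
-/

def IsPartialIsometry {R : Type*} [Mul R] [Star R] (a : R) : Prop :=
  a * star a * a = a

namespace IsPartialIsometry

section Semigroup

variable {R : Type*} [Semigroup R] [StarMul R] {a : R}

theorem star_mul_self_mul_star (ha : IsPartialIsometry a) : star a * a * star a = star a := by
  simpa only [star_mul, star_star, mul_assoc] using congrArg star ha

theorem isStarProjection_star_mul_self (ha : IsPartialIsometry a) :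
    IsStarProjection (star a * a) where
  isIdempotentElem := by
    rw [IsIdempotentElem, ← mul_assoc, ha.star_mul_self_mul_star]
  isSelfAdjoint := .star_mul_self a

theorem isStarProjection_mul_star_self (ha : IsPartialIsometry a) :
    IsStarProjection (a * star a) where
  isIdempotentElem := by
    rw [IsIdempotentElem, ← mul_assoc, ha]
  isSelfAdjoint := .mul_star_self a

theorem isIdempotentElem_star_mul_self_mul_mul_star_self {b : R}
    (hab : IsPartialIsometry (a * b)) : IsIdempotentElem (star a * a * (b * star b)) := by
  have h := congrArg (star a * · * star b) hab
  simp only [star_mul, mul_assoc] at h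
  simpa only [IsIdempotentElem, mul_assoc] using h

end Semigroup

section Monoid

variable {R : Type*} [Monoid R] [StarMul R] {s : R}

theorem conj_mul_of_commute (hs : IsPartialIsometry s) (x : R) {y : R}
    (hy : Commute (star s * s) y) :
    s * (x * y) * star s = s * x * star s * (s * y * star s) := by
  calc s * (x * y) * star s = s * x * y * (star s * s * star s) := by
        rw [hs.star_mul_self_mul_star]; simp only [mul_assoc]
    _ = s * x * (star s * s * y) * star s := by
        rw [hy.eq]; simp only [mul_assoc]
    _ = s * x * star s * (s * y * star s) := by simp only [mul_assoc]

theorem conj_list_prod_cons (hs : IsPartialIsometry s) (a : R) (L : List R)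
    (hL : ∀ x ∈ L, Commute (star s * s) x) :
    s * (a :: L).prod * star s = ((a :: L).map (s * · * star s)).prod := by
  induction L generalizing a with
  | nil => simp
  | cons b L ih =>
    have hbL : Commute (star s * s) (b :: L).prod := Commute.list_prod_right _ _ hL
    rw [List.prod_cons, hs.conj_mul_of_commute a hbL,
      ih b fun x hx => hL x (List.mem_cons_of_mem b hx)]
    rfl

end Monoid

section CStarRing

variable {E : Type*} [NonUnitalNormedRing E] [StarRing E] [CStarRing E]

theorem _root_.IsStarProjection.commute_of_isIdempotentElem_mul {p q : E}
    (hp : IsStarProjection p) (hq : IsStarProjection q) (hpq : IsIdempotentElem (p * q)) :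
    Commute p q := by
  have hpp : star p = p := hp.isSelfAdjoint.star_eq
  have hqq : star q = q := hq.isSelfAdjoint.star_eq
  have hstar : star (p * q) = q * p := by rw [star_mul, hpp, hqq]
  -- `x = p q` satisfies `x x⋆ = x p x⋆ = x p`, so `(x - x p)(x - x p)⋆ = 0`.
  have h1 : p * q * star (p * q) = p * q * p := by
    rw [hstar, mul_assoc, ← mul_assoc q, hq.isIdempotentElem.eq, ← mul_assoc]
  have h2 : p * q * (p * star (p * q)) = p * q * p := by
    rw [hstar, ← mul_assoc p q p, ← mul_assoc, hpq.eq]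
  have h2' : p * q * p * star (p * q) = p * q * p := by rw [mul_assoc, h2]
  have h3 : p * q * p * (p * star (p * q)) = p * q * p := by
    rw [← mul_assoc, mul_assoc (p * q) p p, hp.isIdempotentElem.eq, h2']
  have hsa : p * q = p * q * p := by
    rw [← sub_eq_zero, ← CStarRing.mul_star_self_eq_zero_iff, star_sub, star_mul _ p, hpp,
      mul_sub, sub_mul, sub_mul, h1, h2, h2', h3, sub_self]
  calc p * q = star (p * q * p) := by rw [star_mul, star_mul, hpp, hqq, ← mul_assoc, ← hsa]
    _ = q * p := by rw [← hsa, hstar]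

theorem commute_star_mul_self_mul_star_self {s r : E} (hs : IsPartialIsometry s)
    (hr : IsPartialIsometry r) (hsr : IsPartialIsometry (s * r)) :
    Commute (star s * s) (r * star r) :=
  hs.isStarProjection_star_mul_self.commute_of_isIdempotentElem_mul
    hr.isStarProjection_mul_star_self (isIdempotentElem_star_mul_self_mul_mul_star_self hsr)

end CStarRing

end IsPartialIsometry

/-- Lemma 2.1: if `𝒮` is a semigroup of partial isometries, `R_1, …, R_m, S ∈ 𝒮`
(`m ≥ 1`), then `S (Q_{R_1} ⋯ Q_{R_m}) S* = Q_{S R_1} ⋯ Q_{S R_m}`,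
where `Q_T = T T*`. -/
theorem conj_prod_final_projections {H : Type*} [NormedAddCommGroup H]
    [InnerProductSpace ℂ H] [CompleteSpace H] (𝒮 : Set (H →L[ℂ] H))
    (hmul : ∀ A ∈ 𝒮, ∀ B ∈ 𝒮, A * B ∈ 𝒮)
    (hpi : ∀ A ∈ 𝒮, A * star A * A = A)
    (m : ℕ) (hm : 1 ≤ m) (R : Fin m → H →L[ℂ] H) (hR : ∀ i, R i ∈ 𝒮)
    (S : H →L[ℂ] H) (hS : S ∈ 𝒮) :
    S * (List.ofFn fun i => R i * star (R i)).prod * star S =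
      (List.ofFn fun i => (S * R i) * star (S * R i)).prod := by
  obtain ⟨n, rfl⟩ := Nat.exists_eq_add_of_le' hm
  have hS' : IsPartialIsometry S := hpi S hS
  have hcomm (i : Fin (n + 1)) : Commute (star S * S) (R i * star (R i)) :=
    hS'.commute_star_mul_self_mul_star_self (hpi _ (hR i)) (hpi _ (hmul S hS _ (hR i)))
  have hQ (i : Fin (n + 1)) : S * R i * star (S * R i) = S * (R i * star (R i)) * star S := by
    simp only [star_mul, mul_assoc]
  simp_rw [hQ, List.ofFn_succ]
  rw [hS'.conj_list_prod_cons _ _ (List.forall_mem_ofFn_iff.mpr fun i => hcomm i.succ),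
    List.map_cons, List.map_ofFn]
  rfl
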